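/- arXiv:2301.09707 — 3 statements merged into one kernel-verified Lean document; each statement's English description precedes it below -/
import Mathlib

section
/- Let U ⊂ ℝᵐ be open and M ⊂ U a properly embedded C¹ submanifold of codimension at least 1. Let f : U \ M → ℝⁿ be C¹ and suppose that f and each of its first-order partial derivatives extend continuously to U. Then the continuous extension of f to U is of class C¹, and its partial derivatives are the continuous extensions of the partial derivatives of f. -/
/-!
Off `M` the extension `fbar` agrees with `f` on an open set, so its derivative there is `g`.
Near a point of `M`, a chart straightens `M` into a coordinate hyperplane. Each open half-ball
cut by that hyperplane is convex, `fbar` (in the chart) is differentiable on it and its derivative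
tends to the transported value of `g`, so by the mean value theorem the derivative extends to the
closed half-ball. The two closed half-balls form a neighbourhood, which gives differentiability
with derivative `g` on `M` as well; continuity of `g` then makes `fbar` of class `C¹`.
-/

open Set

/-- `M` is a properly embedded `C¹` submanifold of codimension at least `1` of the open set
`U ⊆ ℝᵐ`: `M` is closed in `U` and around each of its points there is a `C¹` straightening
chart `φ` (a `C¹` diffeomorphism onto an open set) taking `M` to the vanishing locus of a
nonempty set `s` of coordinates. -/
def IsProperlyEmbeddedC1Submanifold (m : ℕ) (U M : Set (Fin m → ℝ)) : Prop :=
  M ⊆ U ∧ IsClosed ((↑) ⁻¹' M : Set U) ∧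
  ∀ p ∈ M, ∃ (V : Set (Fin m → ℝ)) (φ ψ : (Fin m → ℝ) → (Fin m → ℝ)),
    p ∈ V ∧ IsOpen V ∧ V ⊆ U ∧
    ContDiffOn ℝ 1 φ V ∧ IsOpen (φ '' V) ∧ ContDiffOn ℝ 1 ψ (φ '' V) ∧
    (∀ q ∈ V, ψ (φ q) = q) ∧
    ∃ s : Set (Fin m), s.Nonempty ∧ M ∩ V = {q ∈ V | ∀ i ∈ s, φ q i = 0}

open Filter Metric
open scoped Topology

theorem IsOpen.diff_of_isClosed_preimage_val {X : Type*} [TopologicalSpace X] {U M : Set X}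
    (hU : IsOpen U) (hM : IsClosed ((↑) ⁻¹' M : Set U)) : IsOpen (U \ M) := by
  have := hU.isOpenMap_subtype_val _ hM.isOpen_compl
  rwa [← preimage_compl, Subtype.image_preimage_coe, ← sdiff_eq] at this

section

variable {E F : Type*} [NormedAddCommGroup E] [NormedSpace ℝ E]
  [NormedAddCommGroup F] [NormedSpace ℝ F]

theorem contDiffOn_one_of_hasFDerivAt {f : E → F} {f' : E → E →L[ℝ] F} {s : Set E}
    (hs : IsOpen s) (hf : ∀ x ∈ s, HasFDerivAt f (f' x) x) (hf' : ContinuousOn f' s) :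
    ContDiffOn ℝ 1 f s := by
  have h := (contDiffOn_succ_iff_hasFDerivWithinAt_of_uniqueDiffOn (n := 0) hs.uniqueDiffOn).2
    ⟨by simp, f', contDiffOn_zero.2 hf', fun x hx => (hf x hx).hasFDerivWithinAt⟩
  rwa [zero_add] at h

theorem dense_setOf_apply_ne_zero {ℓ : E →L[ℝ] ℝ} (hℓ : ℓ ≠ 0) : Dense {y | ℓ y ≠ 0} := by
  rw [← compl_ofPred, ← interior_eq_empty_iff_dense_compl, ← not_nonempty_iff_eq_empty]
  intro hint
  apply hℓ
  have hker := (LinearMap.ker (ℓ : E →ₗ[ℝ] ℝ)).eq_top_of_nonempty_interior' hint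
  ext y
  simpa using (LinearMap.ext_iff.1 (LinearMap.ker_eq_top.1 hker)) y

theorem hasFDerivAt_of_tendsto_fderiv_off_hyperplane {f : E → F} {O : Set E} {x : E}
    {ℓ : E →L[ℝ] ℝ} {f' : E →L[ℝ] F} (hℓ : ℓ ≠ 0) (hO : IsOpen O) (hx : x ∈ O)
    (hf : ContinuousOn f O) (hdiff : ∀ y ∈ O, ℓ y ≠ 0 → DifferentiableAt ℝ f y)
    (h : Tendsto (fderiv ℝ f) (𝓝[O ∩ {y | ℓ y ≠ 0}] x) (𝓝 f')) :
    HasFDerivAt f f' x := by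
  obtain ⟨r, hr, hrO⟩ := nhds_basis_closedBall.mem_iff.1 (hO.mem_nhds hx)
  have half : ∀ k : E →L[ℝ] ℝ, {y | 0 < k y} ⊆ {y | ℓ y ≠ 0} →
      HasFDerivWithinAt f f' (closure (ball x r ∩ {y | 0 < k y})) x := by
    intro k hk
    have hsO : ball x r ∩ {y | 0 < k y} ⊆ O ∩ {y | ℓ y ≠ 0} :=
      inter_subset_inter (ball_subset_closedBall.trans hrO) hk
    have hclosure : closure (ball x r ∩ {y | 0 < k y}) ⊆ O :=
      (closure_mono inter_subset_left).trans ((closure_ball_subset_closedBall).trans hrO)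
    refine hasFDerivWithinAt_closure_of_tendsto_fderiv ?_
      ((convex_ball x r).inter (convex_halfSpace_gt k.toLinearMap.isLinear 0))
      (isOpen_ball.inter (isOpen_lt continuous_const k.continuous)) ?_
      (h.mono_left (nhdsWithin_mono _ hsO))
    · exact fun y hy => (hdiff y (hsO hy).1 (hsO hy).2).differentiableWithinAt
    · exact fun y hy => (hf y (hclosure hy)).mono (hsO.trans inter_subset_left)
  have hcover : ball x r ⊆
      closure (ball x r ∩ {y | 0 < ℓ y}) ∪ closure (ball x r ∩ {y | 0 < (-ℓ) y}) := by
    refine ((dense_setOf_apply_ne_zero hℓ).open_subset_closure_inter isOpen_ball).trans ?_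
    rw [← closure_union, ← inter_union_distrib_left]
    refine closure_mono (inter_subset_inter_right _ fun y hy => ?_)
    simpa [neg_pos] using (lt_or_gt_of_ne hy).symm
  have hpos := half ℓ fun y hy => hy.ne'
  have hneg := half (-ℓ) fun y hy => (neg_pos.1 hy).ne
  exact ((hpos.union hneg).mono hcover).hasFDerivAt (ball_mem_nhds x hr)

theorem fderiv_comp_fderiv_eq_id_of_eventually_leftInverse {E' : Type*}
    [NormedAddCommGroup E'] [NormedSpace ℝ E'] {φ : E → E'} {ψ : E' → E} {p : E}
    (hφ : DifferentiableAt ℝ φ p) (hψ : DifferentiableAt ℝ ψ (φ p))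
    (hψφ : ∀ᶠ q in 𝓝 p, ψ (φ q) = q) :
    (fderiv ℝ ψ (φ p)).comp (fderiv ℝ φ p) = ContinuousLinearMap.id ℝ E :=
  ((hψ.hasFDerivAt.comp p hφ.hasFDerivAt).congr_of_eventuallyEq
    (hψφ.mono fun _ h => h.symm)).unique (hasFDerivAt_id p)

theorem hasFDerivAt_of_straightening {E' : Type*} [NormedAddCommGroup E'] [NormedSpace ℝ E']
    {fbar : E → F} {g : E → E →L[ℝ] F} {V : Set E} {φ : E → E'} {ψ : E' → E}
    {ℓ : E' →L[ℝ] ℝ} {p : E} (hℓ : ℓ ≠ 0) (hV : IsOpen V) (hp : p ∈ V)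
    (hφ : DifferentiableAt ℝ φ p) (hO : IsOpen (φ '' V)) (hψ : ContDiffOn ℝ 1 ψ (φ '' V))
    (hψφ : ∀ q ∈ V, ψ (φ q) = q) (hfbar : ContinuousOn fbar V) (hg : ContinuousOn g V)
    (hder : ∀ q ∈ V, ℓ (φ q) ≠ 0 → HasFDerivAt fbar (g q) q) :
    HasFDerivAt fbar (g p) p := by
  set O := φ '' V
  have hψO : MapsTo ψ O V := by
    rintro _ ⟨q, hq, rfl⟩
    rwa [hψφ q hq]
  have hφψ : ∀ y ∈ O, φ (ψ y) = y := by
    rintro _ ⟨q, hq, rfl⟩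
    rw [hψφ q hq]
  have hψdiff : ∀ y ∈ O, DifferentiableAt ℝ ψ y := fun y hy =>
    (hψ.differentiableOn one_ne_zero).differentiableAt (hO.mem_nhds hy)
  have hp' : φ p ∈ O := mem_image_of_mem φ hp
  have hF : ∀ y ∈ O, ℓ y ≠ 0 →
      HasFDerivAt (fbar ∘ ψ) ((g (ψ y)).comp (fderiv ℝ ψ y)) y := fun y hy hne =>
    (hder (ψ y) (hψO hy) (by rwa [hφψ y hy])).comp y (hψdiff y hy).hasFDerivAt
  have hF' : ContinuousOn (fun y => (g (ψ y)).comp (fderiv ℝ ψ y)) O :=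
    (hg.comp hψ.continuousOn hψO).clm_comp (hψ.continuousOn_fderiv_of_isOpen hO le_rfl)
  have htend : Tendsto (fderiv ℝ (fbar ∘ ψ)) (𝓝[O ∩ {y | ℓ y ≠ 0}] (φ p))
      (𝓝 ((g p).comp (fderiv ℝ ψ (φ p)))) := by
    have hlim : Tendsto (fun y => (g (ψ y)).comp (fderiv ℝ ψ y)) (𝓝[O ∩ {y | ℓ y ≠ 0}] (φ p))
        (𝓝 ((g (ψ (φ p))).comp (fderiv ℝ ψ (φ p)))) :=
      (hF' (φ p) hp').mono_left (nhdsWithin_mono _ inter_subset_left)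
    rw [hψφ p hp] at hlim
    exact hlim.congr' (eventually_mem_nhdsWithin.mono fun y hy => (hF y hy.1 hy.2).fderiv.symm)
  have hFp := hasFDerivAt_of_tendsto_fderiv_off_hyperplane hℓ hO hp'
    (hfbar.comp hψ.continuousOn hψO) (fun y hy hne => (hF y hy hne).differentiableAt) htend
  have hψφp : ∀ᶠ q in 𝓝 p, ψ (φ q) = q := eventually_of_mem (hV.mem_nhds hp) hψφ
  have hcomp := hFp.comp p hφ.hasFDerivAt
  rw [ContinuousLinearMap.comp_assoc, fderiv_comp_fderiv_eq_id_of_eventually_leftInverse hφ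
    (hψdiff _ hp') hψφp, ContinuousLinearMap.comp_id] at hcomp
  exact hcomp.congr_of_eventuallyEq (hψφp.mono fun q hq => by simp [hq])

end

theorem ContinuousLinearMap.proj_ne_zero {R ι : Type*} [Semiring R] [TopologicalSpace R]
    [Nontrivial R] (i : ι) : ContinuousLinearMap.proj (R := R) (φ := fun _ : ι => R) i ≠ 0 :=
  fun h => by
    classical
    simpa using congrArg (fun L => L (Pi.single i 1)) h

/-- let `U ⊆ ℝᵐ` be open and `M ⊆ U` a properly embedded `C¹` submanifold of
codimension `≥ 1`.  If `f` is `C¹` on `U \ M` and both `f` and its derivative extend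
continuously to `U` (as `f̄` and `g`), then `f̄` is `C¹` on `U` with derivative `g`. -/
theorem stmt4 (m n : ℕ) (U M : Set (Fin m → ℝ)) (hU : IsOpen U)
    (hM : IsProperlyEmbeddedC1Submanifold m U M)
    (f fbar : (Fin m → ℝ) → (Fin n → ℝ))
    (hf : ContDiffOn ℝ 1 f (U \ M))
    (g : (Fin m → ℝ) → ((Fin m → ℝ) →L[ℝ] (Fin n → ℝ)))
    (hfbar_cont : ContinuousOn fbar U) (hfbar_eq : EqOn fbar f (U \ M))
    (hg_cont : ContinuousOn g U)
    (hg_eq : ∀ x ∈ U \ M, g x = fderivWithin ℝ f (U \ M) x) :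
    ContDiffOn ℝ 1 fbar U ∧ ∀ x ∈ U, fderivWithin ℝ fbar U x = g x := by
  obtain ⟨-, hMclosed, hchart⟩ := hM
  have hUM : IsOpen (U \ M) := hU.diff_of_isClosed_preimage_val hMclosed
  have hoff : ∀ x ∈ U \ M, HasFDerivAt fbar (g x) x := fun x hx => by
    have hxUM := hUM.mem_nhds hx
    rw [hg_eq x hx, fderivWithin_of_isOpen hUM hx]
    exact ((hf.differentiableOn one_ne_zero).differentiableAt hxUM).hasFDerivAt
      |>.congr_of_eventuallyEq (eventuallyEq_of_mem hxUM hfbar_eq)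
  have hder : ∀ p ∈ U, HasFDerivAt fbar (g p) p := by
    intro p hpU
    by_cases hpM : p ∉ M
    · exact hoff p ⟨hpU, hpM⟩
    obtain ⟨V, φ, ψ, hpV, hV, hVU, hφ, hO, hψ, hψφ, s, ⟨i, hi⟩, hMV⟩ :=
      hchart p (not_not.1 hpM)
    refine hasFDerivAt_of_straightening (ContinuousLinearMap.proj_ne_zero i) hV hpV
      ((hφ.differentiableOn one_ne_zero).differentiableAt (hV.mem_nhds hpV)) hO hψ hψφ
      (hfbar_cont.mono hVU) (hg_cont.mono hVU)
      fun q hq hne => hoff q ⟨hVU hq, fun hqM => hne ?_⟩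
    have hqMV : q ∈ M ∩ V := ⟨hqM, hq⟩
    rw [hMV] at hqMV
    exact hqMV.2 i hi
  exact ⟨contDiffOn_one_of_hasFDerivAt hU hder hg_cont,
    fun x hx => (hder x hx).hasFDerivWithinAt.fderivWithin (hU.uniqueDiffOn x hx)⟩
end

section
/- Let f : V(−π,π,r₁,r₂,n) → ℝᵐ be C^∞ of order (α, p) with α > 0, and let k be a nonnegative integer with k < α and k ≤ p. Then f extends to a C^k function on some full neighborhood {|x| < r₁′} × {|y| < r₂′} of the origin, and all partial derivatives of the extension up to order k vanish identically on {x = 0}. -/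
open Set Metric

/-- The sector-product domain `V(a,b,r₁,r₂,n) ⊆ ℂ* × ℂⁿ` (no restriction on the argument
when `a = −π` and `b = π`). -/
def Sector (a b r₁ r₂ : ℝ) (n : ℕ) : Set (ℂ × (Fin n → ℂ)) :=
  {z | z.1 ≠ 0 ∧ ‖z.1‖ < r₁ ∧ ‖z.2‖ < r₂ ∧
    ((a = -Real.pi ∧ b = Real.pi) ∨ (a < z.1.arg ∧ z.1.arg < b))}

/-- `f : V → F` is of order `(α, p)` at the origin: for every `k ≤ p`, the `k`-th order
derivative `g` of `f` (taken within `V`) satisfies that `|x|^{k−α} ‖g(x,y)‖` is bounded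
near the origin of `ℂ^{n+1}`. -/
def IsOrderOn {n : ℕ} {F : Type*} [NormedAddCommGroup F] [NormedSpace ℝ F]
    (V : Set (ℂ × (Fin n → ℂ))) (f : ℂ × (Fin n → ℂ) → F) (α : ℝ) (p : ℕ) : Prop :=
  ∀ k ≤ p, ∃ C ε : ℝ, 0 < ε ∧ ∀ z ∈ V, ‖z‖ < ε →
    ‖z.1‖ ^ ((k : ℝ) - α) * ‖iteratedFDerivWithin ℝ k f V z‖ ≤ C


/-- a `C^∞` map of order `(α, p)` with `α > 0` on the full slit domain
`V(−π,π,r₁,r₂,n)` extends, for any `k < α` with `k ≤ p`, to a `C^k` map on a full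
neighborhood `{|x| < r₁′} × {|y| < r₂′}` of the origin whose derivatives up to order `k`
vanish on `{x = 0}`. -/
theorem stmt9 (n m : ℕ) (r₁ r₂ α : ℝ) (p k : ℕ)
    (hr₁ : 0 < r₁) (hr₂ : 0 < r₂) (hα : 0 < α) (hkα : (k : ℝ) < α) (hkp : k ≤ p)
    (f : ℂ × (Fin n → ℂ) → EuclideanSpace ℝ (Fin m))
    (hsmooth : ContDiffOn ℝ (⊤ : ℕ∞) f (Sector (-Real.pi) Real.pi r₁ r₂ n))
    (hord : IsOrderOn (Sector (-Real.pi) Real.pi r₁ r₂ n) f α p) :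
    ∃ r₁' r₂' : ℝ, 0 < r₁' ∧ r₁' ≤ r₁ ∧ 0 < r₂' ∧ r₂' ≤ r₂ ∧
      ∃ g : ℂ × (Fin n → ℂ) → EuclideanSpace ℝ (Fin m),
        ContDiffOn ℝ k g {z | ‖z.1‖ < r₁' ∧ ‖z.2‖ < r₂'} ∧
        (∀ z : ℂ × (Fin n → ℂ), ‖z.1‖ < r₁' → ‖z.2‖ < r₂' → z.1 ≠ 0 → g z = f z) ∧
        (∀ j ≤ k, ∀ z : ℂ × (Fin n → ℂ), ‖z.1‖ < r₁' → ‖z.2‖ < r₂' → z.1 = 0 →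
          iteratedFDerivWithin ℝ j g {z | ‖z.1‖ < r₁' ∧ ‖z.2‖ < r₂'} z = 0) := by
  classical
  set V : Set (ℂ × (Fin n → ℂ)) := Sector (-Real.pi) Real.pi r₁ r₂ n with hVdef
  have hVmem : ∀ z : ℂ × (Fin n → ℂ), z ∈ V ↔ z.1 ≠ 0 ∧ ‖z.1‖ < r₁ ∧ ‖z.2‖ < r₂ := by
    intro z
    simp only [hVdef, Sector, Set.mem_setOf_eq]
    tauto
  have hVopen : IsOpen V := by
    have hset : V = (Prod.fst ⁻¹' ({0}ᶜ : Set ℂ)) ∩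
        ((fun z : ℂ × (Fin n → ℂ) => ‖z.1‖) ⁻¹' Set.Iio r₁) ∩
        ((fun z : ℂ × (Fin n → ℂ) => ‖z.2‖) ⁻¹' Set.Iio r₂) := by
      ext z
      simp only [hVmem z, Set.mem_inter_iff, Set.mem_preimage, Set.mem_compl_iff,
        Set.mem_singleton_iff, Set.mem_Iio]
      tauto
    rw [hset]
    exact ((isOpen_compl_singleton.preimage continuous_fst).inter
      (isOpen_Iio.preimage continuous_fst.norm)).inter
      (isOpen_Iio.preimage continuous_snd.norm)
  -- uniform derivative bounds near the origin
  have keyj : ∀ j : ℕ, ∃ C ε : ℝ, 0 < ε ∧ 0 ≤ C ∧ (j ≤ k → ∀ z ∈ V, ‖z‖ < ε →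
      ‖iteratedFDerivWithin ℝ j f V z‖ ≤ C * ‖z.1‖ ^ (α - (j : ℝ))) := by
    intro j
    by_cases hj : j ≤ k
    · obtain ⟨C, ε, hε, hC⟩ := hord j (hj.trans hkp)
      refine ⟨max C 0, ε, hε, le_max_right _ _, fun _ z hz hze => ?_⟩
      have hz1 : (0:ℝ) < ‖z.1‖ := norm_pos_iff.2 ((hVmem z).1 hz).1
      have h2 : ‖z.1‖ ^ ((j:ℝ) - α) * ‖iteratedFDerivWithin ℝ j f V z‖ ≤ max C 0 :=
        (hC z hz hze).trans (le_max_left _ _)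
      have h3 := mul_le_mul_of_nonneg_left h2
        (le_of_lt (Real.rpow_pos_of_pos hz1 (α - (j:ℝ))))
      have hsum : (α - (j:ℝ)) + ((j:ℝ) - α) = 0 := by ring
      calc ‖iteratedFDerivWithin ℝ j f V z‖
          = ‖z.1‖ ^ (α - (j:ℝ)) * (‖z.1‖ ^ ((j:ℝ) - α) * ‖iteratedFDerivWithin ℝ j f V z‖) := by
            rw [← mul_assoc, ← Real.rpow_add hz1, hsum, Real.rpow_zero, one_mul]
        _ ≤ ‖z.1‖ ^ (α - (j:ℝ)) * max C 0 := h3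
        _ = max C 0 * ‖z.1‖ ^ (α - (j:ℝ)) := mul_comm _ _
    · exact ⟨0, 1, one_pos, le_rfl, fun h => absurd h hj⟩
  choose Cf εf hεf hCf hbf using keyj
  have hne : (Finset.range (k+1)).Nonempty := ⟨0, by simp⟩
  set εm : ℝ := (Finset.range (k+1)).inf' hne εf with hεmdef
  set Cm : ℝ := (Finset.range (k+1)).sup' hne Cf with hCmdef
  have hεm : 0 < εm := by
    rw [hεmdef, Finset.lt_inf'_iff]
    exact fun j _ => hεf j
  have hCm0 : 0 ≤ Cm :=
    le_trans (hCf 0) (Finset.le_sup' Cf (by simp : 0 ∈ Finset.range (k+1)))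
  have hbound : ∀ j ≤ k, ∀ z ∈ V, ‖z‖ < εm →
      ‖iteratedFDerivWithin ℝ j f V z‖ ≤ Cm * ‖z.1‖ ^ (α - (j : ℝ)) := by
    intro j hj z hz hze
    have hmem : j ∈ Finset.range (k+1) := Finset.mem_range.2 (Nat.lt_succ_of_le hj)
    have h1 : εm ≤ εf j := Finset.inf'_le _ hmem
    exact (hbf j hj z hz (lt_of_lt_of_le hze h1)).trans
      (mul_le_mul_of_nonneg_right (Finset.le_sup' Cf hmem)
        (Real.rpow_nonneg (norm_nonneg _) _))
  -- the radius
  have hmin : 0 < min (min r₁ r₂) εm := lt_min (lt_min hr₁ hr₂) hεm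
  set r' : ℝ := min (min r₁ r₂) εm / 2 with hr'def
  have hr'pos : 0 < r' := half_pos hmin
  have hr'r₁ : r' ≤ r₁ :=
    le_trans (le_of_lt (half_lt_self hmin)) (le_trans (min_le_left _ _) (min_le_left _ _))
  have hr'r₂ : r' ≤ r₂ :=
    le_trans (le_of_lt (half_lt_self hmin)) (le_trans (min_le_left _ _) (min_le_right _ _))
  have hr'εm : r' < εm := lt_of_lt_of_le (half_lt_self hmin) (min_le_right _ _)
  set U : Set (ℂ × (Fin n → ℂ)) := {z | ‖z.1‖ < r' ∧ ‖z.2‖ < r'} with hUdef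
  have hUopen : IsOpen U := by
    have hset : U = ((fun z : ℂ × (Fin n → ℂ) => ‖z.1‖) ⁻¹' Set.Iio r') ∩
        ((fun z : ℂ × (Fin n → ℂ) => ‖z.2‖) ⁻¹' Set.Iio r') := rfl
    rw [hset]
    exact (isOpen_Iio.preimage continuous_fst.norm).inter
      (isOpen_Iio.preimage continuous_snd.norm)
  have hUV : ∀ z ∈ U, z.1 ≠ 0 → z ∈ V := by
    intro z hz hz1
    exact (hVmem z).2 ⟨hz1, lt_of_lt_of_le hz.1 hr'r₁, lt_of_lt_of_le hz.2 hr'r₂⟩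
  have hUε : ∀ z ∈ U, ‖z‖ < εm := by
    intro z hz
    rw [Prod.norm_def]
    exact max_lt (lt_trans hz.1 hr'εm) (lt_trans hz.2 hr'εm)
  -- the extension and its Taylor series
  set g : ℂ × (Fin n → ℂ) → EuclideanSpace ℝ (Fin m) :=
    fun z => if z.1 = 0 then 0 else f z with hgdef
  set P : (ℂ × (Fin n → ℂ)) →
      FormalMultilinearSeries ℝ (ℂ × (Fin n → ℂ)) (EuclideanSpace ℝ (Fin m)) :=
    fun z i => if z.1 = 0 then 0 else iteratedFDerivWithin ℝ i f V z with hPdef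
  have hPbound : ∀ i ≤ k, ∀ w ∈ U, ‖P w i‖ ≤ Cm * ‖w.1‖ ^ (α - (i:ℝ)) := by
    intro i hi w hw
    by_cases hw1 : w.1 = 0
    · simp only [hPdef, if_pos hw1, norm_zero]
      exact mul_nonneg hCm0 (Real.rpow_nonneg (norm_nonneg _) _)
    · simp only [hPdef, if_neg hw1]
      exact hbound i hi w (hUV w hw hw1) (hUε w hw)
  have hTf : HasFTaylorSeriesUpToOn (k : ℕ) f (ftaylorSeriesWithin ℝ f V) V :=
    (hsmooth.of_le (by exact_mod_cast le_top)).ftaylorSeriesWithin hVopen.uniqueDiffOn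
  have hEqnear : ∀ z : ℂ × (Fin n → ℂ), z.1 ≠ 0 → ∀ i : ℕ,
      (fun w => P w i) =ᶠ[nhds z] (fun w => iteratedFDerivWithin ℝ i f V w) := by
    intro z hz i
    have hopen : IsOpen {w : ℂ × (Fin n → ℂ) | w.1 ≠ 0} := by
      have : {w : ℂ × (Fin n → ℂ) | w.1 ≠ 0} = Prod.fst ⁻¹' ({0}ᶜ : Set ℂ) := rfl
      rw [this]
      exact isOpen_compl_singleton.preimage continuous_fst
    filter_upwards [hopen.mem_nhds hz] with w hw
    simp only [hPdef, if_neg hw]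
  have htay : HasFTaylorSeriesUpToOn (k : ℕ) g P U := by
    constructor
    · intro x hx
      by_cases hx1 : x.1 = 0
      · simp only [hPdef, hgdef, if_pos hx1, ContinuousMultilinearMap.curry0_apply,
          ContinuousMultilinearMap.zero_apply]
      · have hxV := hUV x hx hx1
        simp only [hPdef, hgdef, if_neg hx1, ContinuousMultilinearMap.curry0_apply,
          iteratedFDerivWithin_zero_apply]
    · intro i hik x hx
      have hik' : i < k := by exact_mod_cast hik
      by_cases hx1 : x.1 = 0
      · have hP0 : P x (i+1) = 0 := if_pos hx1
        have hc0 : ((0 : ContinuousMultilinearMap ℝ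
            (fun _ : Fin (i+1) => ℂ × (Fin n → ℂ)) (EuclideanSpace ℝ (Fin m))).curryLeft) = 0 := by
          apply ContinuousLinearMap.ext; intro y
          apply ContinuousMultilinearMap.ext; intro v
          rw [ContinuousMultilinearMap.curryLeft_apply]
          simp
        rw [hP0, hc0]
        refine hasFDerivWithinAt_iff_isLittleO.2 ?_
        have hPx : P x i = 0 := if_pos hx1
        have hαi1 : (0:ℝ) < α - (i:ℝ) - 1 := by
          have h1 : ((i:ℝ) + 1) ≤ (k:ℝ) := by exact_mod_cast hik'
          linarith
        have hαi : (0:ℝ) < α - (i:ℝ) := by linarith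
        have hO : (fun w => P w i) =O[nhdsWithin x U]
            (fun w => ‖w - x‖ ^ (α - (i:ℝ))) := by
          rw [Asymptotics.isBigO_iff]
          refine ⟨Cm, ?_⟩
          filter_upwards [self_mem_nhdsWithin] with w hw
          have h1 := hPbound i hik'.le w hw
          have h2 : ‖w.1‖ ≤ ‖w - x‖ := by
            have hfst : (w - x).1 = w.1 := by
              simp [Prod.fst_sub, hx1]
            calc ‖w.1‖ = ‖(w - x).1‖ := by rw [hfst]
              _ ≤ ‖w - x‖ := norm_fst_le _
          have h3 : ‖w.1‖ ^ (α - (i:ℝ)) ≤ ‖w - x‖ ^ (α - (i:ℝ)) :=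
            Real.rpow_le_rpow (norm_nonneg _) h2 hαi.le
          calc ‖P w i‖ ≤ Cm * ‖w.1‖ ^ (α - (i:ℝ)) := h1
            _ ≤ Cm * ‖w - x‖ ^ (α - (i:ℝ)) := by
                exact mul_le_mul_of_nonneg_left h3 hCm0
            _ = Cm * ‖‖w - x‖ ^ (α - (i:ℝ))‖ := by
                rw [Real.norm_of_nonneg (Real.rpow_nonneg (norm_nonneg _) _)]
        have ho : (fun w : ℂ × (Fin n → ℂ) => ‖w - x‖ ^ (α - (i:ℝ)))
            =o[nhdsWithin x U] (fun w => w - x) := by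
          rw [← Asymptotics.isLittleO_norm_right]
          have htend : Filter.Tendsto (fun w : ℂ × (Fin n → ℂ) => ‖w - x‖ ^ (α - (i:ℝ) - 1))
              (nhdsWithin x U) (nhds 0) := by
            have h1 : Filter.Tendsto (fun w : ℂ × (Fin n → ℂ) => ‖w - x‖)
                (nhdsWithin x U) (nhds 0) := by
              have hc : Continuous (fun w : ℂ × (Fin n → ℂ) => ‖w - x‖) :=
                (continuous_id.sub continuous_const).norm
              have := hc.tendsto x
              simp only [sub_self, norm_zero] at this
              exact this.mono_left nhdsWithin_le_nhds
            have h2 : Filter.Tendsto (fun t : ℝ => t ^ (α - (i:ℝ) - 1)) (nhds 0) (nhds 0) := by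
              have hca := Real.continuousAt_rpow_const 0 (α - (i:ℝ) - 1) (Or.inr hαi1.le)
              have := hca.tendsto
              rwa [Real.zero_rpow (ne_of_gt hαi1)] at this
            exact h2.comp h1
          have hlo : (fun w : ℂ × (Fin n → ℂ) => ‖w - x‖ ^ (α - (i:ℝ) - 1))
              =o[nhdsWithin x U] (fun _ => (1:ℝ)) := (Asymptotics.isLittleO_one_iff ℝ).2 htend
          have hglobal := hlo.mul_isBigO
            (Asymptotics.isBigO_refl (fun w : ℂ × (Fin n → ℂ) => ‖w - x‖) (nhdsWithin x U))
          refine hglobal.congr (fun w => ?_) (fun w => one_mul _)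
          have h0 : α - (i:ℝ) - 1 + 1 ≠ 0 := by
            intro h; rw [show α - (i:ℝ) - 1 + 1 = α - (i:ℝ) from by ring] at h; linarith
          calc ‖w - x‖ ^ (α - (i:ℝ) - 1) * ‖w - x‖
              = ‖w - x‖ ^ (α - (i:ℝ) - 1) * ‖w - x‖ ^ (1:ℝ) := by rw [Real.rpow_one]
            _ = ‖w - x‖ ^ (α - (i:ℝ) - 1 + 1) := (Real.rpow_add' (norm_nonneg _) h0).symm
            _ = ‖w - x‖ ^ (α - (i:ℝ)) := by rw [show α - (i:ℝ) - 1 + 1 = α - (i:ℝ) from by ring]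
        have hfinal := hO.trans_isLittleO ho
        refine hfinal.congr' ?_ (Filter.EventuallyEq.refl _ _)
        filter_upwards [self_mem_nhdsWithin] with w hw
        simp [hPx]
      · have hxV := hUV x hx hx1
        have hik2 : ((i : ℕ∞) : WithTop ℕ∞) < ((k : ℕ) : WithTop ℕ∞) := by
          exact_mod_cast hik'
        have hfdV := hTf.fderivWithin i hik2 x hxV
        have hfd : HasFDerivAt (fun w => iteratedFDerivWithin ℝ i f V w)
            ((iteratedFDerivWithin ℝ (i+1) f V x).curryLeft) x :=
          hfdV.hasFDerivAt (hVopen.mem_nhds hxV)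
        have hfd2 : HasFDerivAt (fun w => P w i) ((P x (i+1)).curryLeft) x := by
          have hval : P x (i+1) = iteratedFDerivWithin ℝ (i+1) f V x := if_neg hx1
          rw [hval]
          exact hfd.congr_of_eventuallyEq (hEqnear x hx1 i)
        exact hfd2.hasFDerivWithinAt
    · intro i hik
      have hik' : i ≤ k := by exact_mod_cast hik
      intro x hx
      by_cases hx1 : x.1 = 0
      · have hPx : P x i = 0 := if_pos hx1
        have hαi : (0:ℝ) < α - (i:ℝ) := by
          have h1 : ((i:ℝ)) ≤ (k:ℝ) := by exact_mod_cast hik'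
          linarith
        rw [ContinuousWithinAt, hPx]
        have htend : Filter.Tendsto (fun w : ℂ × (Fin n → ℂ) => Cm * ‖w.1‖ ^ (α - (i:ℝ)))
            (nhdsWithin x U) (nhds 0) := by
          have h1 : Filter.Tendsto (fun w : ℂ × (Fin n → ℂ) => ‖w.1‖)
              (nhdsWithin x U) (nhds 0) := by
            have hc : Continuous (fun w : ℂ × (Fin n → ℂ) => ‖w.1‖) := continuous_fst.norm
            have := hc.tendsto x
            rw [hx1, norm_zero] at this
            exact this.mono_left nhdsWithin_le_nhds
          have h2 : Filter.Tendsto (fun t : ℝ => t ^ (α - (i:ℝ))) (nhds 0) (nhds 0) := by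
            have hca := Real.continuousAt_rpow_const 0 (α - (i:ℝ)) (Or.inr hαi.le)
            have := hca.tendsto
            rwa [Real.zero_rpow (ne_of_gt hαi)] at this
          have h3 := (h2.comp h1).const_mul Cm
          rwa [mul_zero] at h3
        refine squeeze_zero_norm' ?_ htend
        filter_upwards [self_mem_nhdsWithin] with w hw
        exact hPbound i hik' w hw
      · have hxV := hUV x hx hx1
        have hik2 : ((i : ℕ∞) : WithTop ℕ∞) ≤ ((k : ℕ) : WithTop ℕ∞) := by
          exact_mod_cast hik'
        have hcV := hTf.cont i hik2 x hxV
        have hca : ContinuousAt (fun w => iteratedFDerivWithin ℝ i f V w) x :=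
          hcV.continuousAt (hVopen.mem_nhds hxV)
        exact ((continuousAt_congr (hEqnear x hx1 i)).2 hca).continuousWithinAt
  refine ⟨r', r', hr'pos, hr'r₁, hr'pos, hr'r₂, g, ?_, ?_, ?_⟩
  · have h1 : HasFTaylorSeriesUpToOn ((k : ℕ∞) : WithTop ℕ∞) g P U := by
      exact_mod_cast htay
    have h2 := h1.contDiffOn
    exact_mod_cast h2
  · intro z h1 h2 hz
    simp only [hgdef, if_neg hz]
  · intro j hj z h1 h2 hz1
    have hzU : z ∈ U := ⟨h1, h2⟩
    have hmn : ((j : ℕ) : WithTop ℕ∞) ≤ ((k : ℕ) : WithTop ℕ∞) := by exact_mod_cast hj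
    have := htay.eq_iteratedFDerivWithin_of_uniqueDiffOn hmn hUopen.uniqueDiffOn hzU
    rw [← this]
    exact if_pos hz1
end

section
/- Let F : V(a,b,r₁,r₂,n) → W be a diffeomorphism of order (β, p) with β > 1 and p ≥ 1 (i.e. x∘F ≡ x and F − id is of order (β,p)), and let f : V(a,b,r₁′,r₂′,n) → ℝᵐ be of order (α, p). Then there exist r̃₁, r̃₂ > 0 such that f ∘ F is defined on V(a,b,r̃₁,r̃₂,n) and is of order (α, p). -/
open Set Metric

/-- `F` is a diffeomorphism of order `(β, p)` on `V`: it is a smooth diffeomorphism onto its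
image, preserves the `x`-coordinate (`x ∘ F ≡ x`), and `F − id` is of order `(β, p)`. -/
def IsDiffeoOrder {n : ℕ} (V : Set (ℂ × (Fin n → ℂ)))
    (F : ℂ × (Fin n → ℂ) → ℂ × (Fin n → ℂ)) (β : ℝ) (p : ℕ) : Prop :=
  ContDiffOn ℝ (⊤ : ℕ∞) F V ∧ Set.InjOn F V ∧
  (∀ z ∈ V, (F z).1 = z.1) ∧
  IsOrderOn V (fun z => F z - z) β p

lemma sector_isOpen {a b r₁ r₂ : ℝ} {n : ℕ} (hb : b ≤ Real.pi) :
    IsOpen (Sector a b r₁ r₂ n) := by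
  rw [isOpen_iff_mem_nhds]
  rintro z ⟨h0, h1, h2, h3⟩
  have o1 : IsOpen {w : ℂ × (Fin n → ℂ) | w.1 ≠ 0} :=
    isOpen_compl_singleton.preimage continuous_fst
  have o2 : IsOpen {w : ℂ × (Fin n → ℂ) | ‖w.1‖ < r₁} :=
    isOpen_lt continuous_fst.norm continuous_const
  have o3 : IsOpen {w : ℂ × (Fin n → ℂ) | ‖w.2‖ < r₂} :=
    isOpen_lt continuous_snd.norm continuous_const
  have hU : {w : ℂ × (Fin n → ℂ) | w.1 ≠ 0 ∧ ‖w.1‖ < r₁ ∧ ‖w.2‖ < r₂} ∈ nhds z := by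
    have : IsOpen ({w : ℂ × (Fin n → ℂ) | w.1 ≠ 0} ∩
        ({w | ‖w.1‖ < r₁} ∩ {w | ‖w.2‖ < r₂})) := o1.inter (o2.inter o3)
    exact Filter.mem_of_superset (this.mem_nhds ⟨h0, h1, h2⟩) (fun w hw => ⟨hw.1, hw.2.1, hw.2.2⟩)
  rcases h3 with h | ⟨ha', hb'⟩
  · exact Filter.mem_of_superset hU (fun w hw => ⟨hw.1, hw.2.1, hw.2.2, Or.inl h⟩)
  · have hslit : z.1 ∈ Complex.slitPlane := by
      rw [Complex.mem_slitPlane_iff_arg]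
      exact ⟨fun hpi => absurd (hpi ▸ hb') (not_lt.mpr hb), h0⟩
    have hc : ContinuousAt (fun w : ℂ × (Fin n → ℂ) => w.1.arg) z :=
      (Complex.continuousAt_arg hslit).comp continuous_fst.continuousAt
    have hA : {w : ℂ × (Fin n → ℂ) | w.1.arg ∈ Set.Ioo a b} ∈ nhds z :=
      hc.preimage_mem_nhds (Ioo_mem_nhds ha' hb')
    filter_upwards [hU, hA] with w hw hw'
    exact ⟨hw.1, hw.2.1, hw.2.2, Or.inr ⟨hw'.1, hw'.2⟩⟩

lemma sector_subset {a b r₁ r₂ r₁' r₂' : ℝ} {n : ℕ} (h1 : r₁ ≤ r₁') (h2 : r₂ ≤ r₂') :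
    Sector a b r₁ r₂ n ⊆ Sector a b r₁' r₂' n :=
  fun _ hz => ⟨hz.1, hz.2.1.trans_le h1, hz.2.2.1.trans_le h2, hz.2.2.2⟩

lemma isOrderOn_uniform {n : ℕ} {F : Type*} [NormedAddCommGroup F] [NormedSpace ℝ F]
    {V : Set (ℂ × (Fin n → ℂ))} {f : ℂ × (Fin n → ℂ) → F} {α : ℝ} {p : ℕ}
    (h : IsOrderOn V f α p) :
    ∃ C ε : ℝ, 0 < ε ∧ 0 ≤ C ∧ ∀ k ≤ p, ∀ z ∈ V, ‖z‖ < ε →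
      ‖z.1‖ ^ ((k : ℝ) - α) * ‖iteratedFDerivWithin ℝ k f V z‖ ≤ C := by
  induction p with
  | zero =>
    obtain ⟨C, ε, hε, hC⟩ := h 0 le_rfl
    refine ⟨max C 0, ε, hε, le_max_right _ _, fun k hk z hz hze => ?_⟩
    obtain rfl := Nat.le_zero.mp hk
    exact (hC z hz hze).trans (le_max_left _ _)
  | succ p ih =>
    obtain ⟨C, ε, hε, hC0, hC⟩ := ih (fun k hk => h k (hk.trans p.le_succ))
    obtain ⟨C', ε', hε', hC'⟩ := h (p + 1) le_rfl
    refine ⟨max C (max C' 0), min ε ε', lt_min hε hε',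
      le_max_of_le_right (le_max_right _ _), fun k hk z hz hze => ?_⟩
    rcases Nat.le_succ_iff.mp hk with hk' | rfl
    · exact (hC k hk' z hz (hze.trans_le (min_le_left _ _))).trans (le_max_left _ _)
    · exact (hC' z hz (hze.trans_le (min_le_right _ _))).trans
        (le_max_of_le_right (le_max_left _ _))

lemma le_of_rpow_mul_le {x C D : ℝ} (hx : 0 < x) {u : ℝ} (h : x ^ u * D ≤ C) :
    D ≤ C * x ^ (-u) := by
  have h2 := mul_le_mul_of_nonneg_left h (Real.rpow_nonneg hx.le (-u))
  calc D = x ^ (-u) * (x ^ u * D) := by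
            rw [← mul_assoc, ← Real.rpow_add hx, neg_add_cancel, Real.rpow_zero, one_mul]
    _ ≤ x ^ (-u) * C := h2
    _ = C * x ^ (-u) := mul_comm _ _

lemma rpow_finset_sum {x : ℝ} (hx : 0 < x) {ι : Type*} (s : Finset ι) (e : ι → ℝ) :
    x ^ (∑ i ∈ s, e i) = ∏ i ∈ s, x ^ e i := by
  classical
  induction s using Finset.induction with
  | empty => simp
  | insert _ _ hns ih => rename_i i s'
                         rw [Finset.sum_insert hns, Finset.prod_insert hns, Real.rpow_add hx, ih]

lemma norm_compAlongOrderedFinpartition_le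
    {𝕜 : Type*} [NontriviallyNormedField 𝕜]
    {E F G : Type*} [NormedAddCommGroup E] [NormedSpace 𝕜 E]
    [NormedAddCommGroup F] [NormedSpace 𝕜 F] [NormedAddCommGroup G] [NormedSpace 𝕜 G]
    {k : ℕ} (q : FormalMultilinearSeries 𝕜 F G) (p : FormalMultilinearSeries 𝕜 E F)
    (c : OrderedFinpartition k) :
    ‖q.compAlongOrderedFinpartition p c‖ ≤ ‖q c.length‖ * ∏ i, ‖p (c.partSize i)‖ := by
  apply ContinuousMultilinearMap.opNorm_le_bound (by positivity) (fun v => ?_)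
  rw [FormalMultilinearSeries.compAlongOrderedFinpartition_apply]
  apply ((q c.length).le_opNorm _).trans
  rw [mul_assoc, ← c.prod_sigma_eq_prod, ← Finset.prod_mul_distrib]
  gcongr with i _
  exact ((p (c.partSize i)).le_opNorm _).trans (le_of_eq rfl)

lemma sum_partSize {k : ℕ} (c : OrderedFinpartition k) : ∑ i, c.partSize i = k := by
  have := c.sum_sigma_eq_sum (fun _ => (1 : ℕ))
  simpa using this

lemma norm_iteratedFDeriv_id_one {E : Type*} [NormedAddCommGroup E] [NormedSpace ℝ E] (x : E) :
    ‖iteratedFDeriv ℝ 1 (fun w : E => w) x‖ ≤ 1 := by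
  apply ContinuousMultilinearMap.opNorm_le_bound zero_le_one (fun v => ?_)
  rw [iteratedFDeriv_one_apply, fderiv_id']
  simp

lemma iteratedFDeriv_id_eq_zero {E : Type*} [NormedAddCommGroup E] [NormedSpace ℝ E]
    {j : ℕ} (hj : 2 ≤ j) (x : E) : ‖iteratedFDeriv ℝ j (fun w : E => w) x‖ = 0 := by
  obtain ⟨i, rfl⟩ : ∃ i, j = i + 2 := ⟨j - 2, by omega⟩
  rw [show i + 2 = (i + 1) + 1 from rfl, ← norm_iteratedFDeriv_fderiv]
  have : (fderiv ℝ (fun w : E => w)) = fun _ => ContinuousLinearMap.id ℝ E :=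
    funext fun w => fderiv_id'
  rw [this, iteratedFDeriv_const_of_ne (Nat.succ_ne_zero i)]
  simp


set_option maxHeartbeats 2000000

/-- if `F` is a diffeomorphism of order `(β, p)` on `V(a,b,r₁,r₂,n)` with
`β > 1`, `p ≥ 1`, and `f` is of order `(α, p)` on `V(a,b,r₁′,r₂′,n)`, then there are
`r̃₁, r̃₂ > 0` such that `f ∘ F` is defined on `V(a,b,r̃₁,r̃₂,n)` and is of order `(α, p)`. -/
theorem stmt13 (n m : ℕ) (a b r₁ r₂ r₁' r₂' α β : ℝ) (p : ℕ)
    (hab : -Real.pi ≤ a) (hab' : a < b) (hb : b ≤ Real.pi)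
    (hr₁ : 0 < r₁) (hr₂ : 0 < r₂) (hr₁' : 0 < r₁') (hr₂' : 0 < r₂')
    (hβ : 1 < β) (hp : 1 ≤ p)
    (F : ℂ × (Fin n → ℂ) → ℂ × (Fin n → ℂ))
    (hF : IsDiffeoOrder (Sector a b r₁ r₂ n) F β p)
    (f : ℂ × (Fin n → ℂ) → EuclideanSpace ℝ (Fin m))
    (hfs : ContDiffOn ℝ (⊤ : ℕ∞) f (Sector a b r₁' r₂' n))
    (hford : IsOrderOn (Sector a b r₁' r₂' n) f α p) :
    ∃ r₁'' r₂'' : ℝ, 0 < r₁'' ∧ r₁'' ≤ r₁ ∧ 0 < r₂'' ∧ r₂'' ≤ r₂ ∧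
      (∀ z ∈ Sector a b r₁'' r₂'' n, F z ∈ Sector a b r₁' r₂' n) ∧
      IsOrderOn (Sector a b r₁'' r₂'' n) (fun z => f (F z)) α p := by
    classical
  obtain ⟨hFs, hFinj, hFx, hFord⟩ := hF
  obtain ⟨C₀, ε₀, hε₀, hC₀0, hC₀⟩ := isOrderOn_uniform hFord
  obtain ⟨Cf, εf, hεf, hCf0, hCf⟩ := isOrderOn_uniform hford
  have hC₀1 : (0:ℝ) < C₀ + 1 := by linarith
  set W := Sector a b r₁ r₂ n with hW
  set t := Sector a b r₁' r₂' n with ht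
  set ρ₁ : ℝ := min (min r₁ r₁') (min 1 (min ε₀ (r₂' / (2 * (C₀ + 1))))) with hρ₁
  set ρ₂ : ℝ := min r₂ (min (r₂' / 2) ε₀) with hρ₂
  have hρ₁pos : 0 < ρ₁ :=
    lt_min (lt_min hr₁ hr₁') (lt_min one_pos (lt_min hε₀ (by positivity)))
  have hρ₂pos : 0 < ρ₂ := lt_min hr₂ (lt_min (by positivity) hε₀)
  set s := Sector a b ρ₁ ρ₂ n with hs
  have hρ₁r₁ : ρ₁ ≤ r₁ := (min_le_left _ _).trans (min_le_left _ _)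
  have hρ₁r₁' : ρ₁ ≤ r₁' := (min_le_left _ _).trans (min_le_right _ _)
  have hρ₁1 : ρ₁ ≤ 1 := (min_le_right _ _).trans (min_le_left _ _)
  have hρ₁ε₀ : ρ₁ ≤ ε₀ := (min_le_right _ _).trans ((min_le_right _ _).trans (min_le_left _ _))
  have hρ₁C : ρ₁ ≤ r₂' / (2 * (C₀ + 1)) :=
    (min_le_right _ _).trans ((min_le_right _ _).trans (min_le_right _ _))
  have hρ₂r₂ : ρ₂ ≤ r₂ := min_le_left _ _
  have hρ₂r₂' : ρ₂ ≤ r₂' / 2 := (min_le_right _ _).trans (min_le_left _ _)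
  have hρ₂ε₀ : ρ₂ ≤ ε₀ := (min_le_right _ _).trans (min_le_right _ _)
  have hsub : s ⊆ W := sector_subset hρ₁r₁ hρ₂r₂
  have hsO : IsOpen s := sector_isOpen hb
  have htO : IsOpen t := sector_isOpen hb
  have hWO : IsOpen W := sector_isOpen hb
  have hzfacts : ∀ z ∈ s, z.1 ≠ 0 ∧ 0 < ‖z.1‖ ∧ ‖z.1‖ ≤ 1 ∧ ‖z‖ < ε₀ := by
    rintro z ⟨h0, h1, h2, h3⟩
    refine ⟨h0, norm_pos_iff.mpr h0, (h1.trans_le hρ₁1).le, ?_⟩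
    rw [Prod.norm_def]
    exact max_lt (h1.trans_le hρ₁ε₀) (h2.trans_le hρ₂ε₀)
  have hsubBound : ∀ z ∈ s, ‖F z - z‖ ≤ C₀ * ‖z.1‖ := by
    intro z hz
    obtain ⟨h0, hpos, hle1, hε⟩ := hzfacts z hz
    have h := hC₀ 0 (Nat.zero_le p) z (hsub hz) hε
    rw [norm_iteratedFDerivWithin_zero] at h
    have h2 := le_of_rpow_mul_le hpos h
    have hββ : ‖z.1‖ ^ (-(((0:ℕ):ℝ) - β)) ≤ ‖z.1‖ := by
      rw [show (-(((0:ℕ):ℝ) - β)) = β by push_cast; ring]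
      calc ‖z.1‖ ^ β ≤ ‖z.1‖ ^ (1:ℝ) := Real.rpow_le_rpow_of_exponent_ge hpos hle1 hβ.le
        _ = ‖z.1‖ := Real.rpow_one _
    calc ‖F z - z‖ ≤ C₀ * ‖z.1‖ ^ (-(((0:ℕ):ℝ) - β)) := h2
      _ ≤ C₀ * ‖z.1‖ := mul_le_mul_of_nonneg_left hββ hC₀0
  have hmap : ∀ z ∈ s, F z ∈ t := by
    rintro z hz
    obtain ⟨h0, hpos, hle1, hε⟩ := hzfacts z hz
    obtain ⟨-, h1, h2, h3⟩ := id hz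
    have hx1 : (F z).1 = z.1 := hFx z (hsub hz)
    refine ⟨by rw [hx1]; exact h0, by rw [hx1]; exact h1.trans_le hρ₁r₁', ?_, ?_⟩
    · have e0 : ‖(F z).2 - z.2‖ ≤ ‖F z - z‖ := by
        have := norm_snd_le (F z - z)
        rwa [Prod.snd_sub] at this
      have e1 : ‖(F z).2‖ ≤ ‖z.2‖ + ‖F z - z‖ := by
        calc ‖(F z).2‖ = ‖z.2 + ((F z).2 - z.2)‖ := by rw [add_sub_cancel]
          _ ≤ ‖z.2‖ + ‖(F z).2 - z.2‖ := norm_add_le _ _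
          _ ≤ ‖z.2‖ + ‖F z - z‖ := by linarith
      have e2 : C₀ * ‖z.1‖ ≤ r₂' / 2 := by
        calc C₀ * ‖z.1‖ ≤ (C₀ + 1) * (r₂' / (2 * (C₀ + 1))) :=
              mul_le_mul (by linarith) ((h1.trans_le hρ₁C).le) (norm_nonneg _) hC₀1.le
          _ = r₂' / 2 := by field_simp
      calc ‖(F z).2‖ ≤ ‖z.2‖ + ‖F z - z‖ := e1
        _ ≤ ‖z.2‖ + C₀ * ‖z.1‖ := by linarith [hsubBound z hz]
        _ < ρ₂ + r₂' / 2 := by linarith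
        _ ≤ r₂' / 2 + r₂' / 2 := by linarith
        _ = r₂' := by ring
    · rw [hx1]; exact h3
  have hFnorm : ∀ z ∈ s, ‖F z‖ ≤ (1 + C₀) * ‖z‖ := by
    intro z hz
    have h1 := hsubBound z hz
    have h2 : ‖z.1‖ ≤ ‖z‖ := norm_fst_le z
    have h3 : C₀ * ‖z.1‖ ≤ C₀ * ‖z‖ := mul_le_mul_of_nonneg_left h2 hC₀0
    calc ‖F z‖ = ‖z + (F z - z)‖ := by rw [add_sub_cancel]
      _ ≤ ‖z‖ + ‖F z - z‖ := norm_add_le _ _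
      _ ≤ (1 + C₀) * ‖z‖ := by linarith
  refine ⟨ρ₁, ρ₂, hρ₁pos, hρ₁r₁, hρ₂pos, hρ₂r₂, hmap, ?_⟩
  intro k hk
  have hku : UniqueDiffOn ℝ s := hsO.uniqueDiffOn
  have htu : UniqueDiffOn ℝ t := htO.uniqueDiffOn
  have hfk : ContDiffOn ℝ k f t := hfs.of_le (by exact_mod_cast le_top)
  have hFk : ContDiffOn ℝ k F s := (hFs.mono hsub).of_le (by exact_mod_cast le_top)
  have htay : HasFTaylorSeriesUpToOn (k : WithTop ℕ∞) (fun z => f (F z))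
      (fun z => ((ftaylorSeriesWithin ℝ f t (F z)).taylorComp (ftaylorSeriesWithin ℝ F s z))) s :=
    (hfk.ftaylorSeriesWithin htu).comp (hFk.ftaylorSeriesWithin hku) hmap
  refine ⟨(Fintype.card (OrderedFinpartition k) : ℝ) * (Cf * (C₀ + 1) ^ k),
    min 1 (εf / (1 + C₀)), lt_min one_pos (by positivity), ?_⟩
  intro z hz hze
  obtain ⟨h0, hpos, hle1, hε0⟩ := hzfacts z hz
  have hFzt : F z ∈ t := hmap z hz
  have hFzε : ‖F z‖ < εf := by
    have h1 : ‖F z‖ ≤ (1 + C₀) * ‖z‖ := hFnorm z hz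
    have h2 : ‖z‖ < εf / (1 + C₀) := hze.trans_le (min_le_right _ _)
    have h3 : (1 + C₀) * ‖z‖ < (1 + C₀) * (εf / (1 + C₀)) :=
      mul_lt_mul_of_pos_left h2 (by linarith)
    have h4 : (1 + C₀) * (εf / (1 + C₀)) = εf := by field_simp
    linarith
  have hEq : iteratedFDerivWithin ℝ k (fun z => f (F z)) s z
      = ((ftaylorSeriesWithin ℝ f t (F z)).taylorComp (ftaylorSeriesWithin ℝ F s z)) k :=
    (htay.eq_iteratedFDerivWithin_of_uniqueDiffOn le_rfl hku hz).symm
  have hDF : ∀ j : ℕ, 1 ≤ j → j ≤ k →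
      ‖iteratedFDerivWithin ℝ j F s z‖ ≤ (C₀ + 1) * ‖z.1‖ ^ (1 - (j:ℝ)) := by
    intro j hj1 hjk
    have hsplit : iteratedFDerivWithin ℝ j F s z =
        iteratedFDerivWithin ℝ j (fun w => F w - w) s z
          + iteratedFDerivWithin ℝ j (fun w : ℂ × (Fin n → ℂ) => w) s z := by
      have h1 : ContDiffOn ℝ j (fun w => F w - w) s :=
        ((hFs.mono hsub).sub contDiffOn_id).of_le (by exact_mod_cast le_top)
      have h2 : ContDiffOn ℝ j (fun w : ℂ × (Fin n → ℂ) => w) s := contDiffOn_id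
      have hFeq : F = ((fun w => F w - w) + fun w : ℂ × (Fin n → ℂ) => w) := by
        funext w; simp
      conv_lhs => rw [hFeq]
      exact iteratedFDerivWithin_add_apply (h1 z hz) (h2 z hz) hku hz
    rw [hsplit]
    have hA : ‖iteratedFDerivWithin ℝ j (fun w => F w - w) s z‖
        ≤ C₀ * ‖z.1‖ ^ (1 - (j:ℝ)) := by
      have e1 : iteratedFDerivWithin ℝ j (fun w => F w - w) s z
          = iteratedFDerivWithin ℝ j (fun w => F w - w) W z := by
        rw [iteratedFDerivWithin_of_isOpen j hsO hz,
          iteratedFDerivWithin_of_isOpen j hWO (hsub hz)]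
      rw [e1]
      have h := hC₀ j (hjk.trans hk) z (hsub hz) hε0
      have h2 := le_of_rpow_mul_le hpos h
      calc ‖iteratedFDerivWithin ℝ j (fun w => F w - w) W z‖
          ≤ C₀ * ‖z.1‖ ^ (-(((j:ℕ):ℝ) - β)) := h2
        _ ≤ C₀ * ‖z.1‖ ^ (1 - (j:ℝ)) := by
            apply mul_le_mul_of_nonneg_left _ hC₀0
            apply Real.rpow_le_rpow_of_exponent_ge hpos hle1
            push_cast
            linarith
    have hB : ‖iteratedFDerivWithin ℝ j (fun w : ℂ × (Fin n → ℂ) => w) s z‖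
        ≤ ‖z.1‖ ^ (1 - (j:ℝ)) := by
      rw [iteratedFDerivWithin_of_isOpen j hsO hz]
      rcases Nat.lt_or_ge j 2 with h2 | h2
      · have hj : j = 1 := by omega
        subst hj
        calc ‖iteratedFDeriv ℝ 1 (fun w : ℂ × (Fin n → ℂ) => w) z‖ ≤ 1 :=
              norm_iteratedFDeriv_id_one z
          _ = ‖z.1‖ ^ (1 - ((1:ℕ):ℝ)) := by norm_num
      · rw [iteratedFDeriv_id_eq_zero h2]
        positivity
    calc ‖iteratedFDerivWithin ℝ j (fun w => F w - w) s z
          + iteratedFDerivWithin ℝ j (fun w : ℂ × (Fin n → ℂ) => w) s z‖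
        ≤ ‖iteratedFDerivWithin ℝ j (fun w => F w - w) s z‖
          + ‖iteratedFDerivWithin ℝ j (fun w : ℂ × (Fin n → ℂ) => w) s z‖ := norm_add_le _ _
      _ ≤ C₀ * ‖z.1‖ ^ (1 - (j:ℝ)) + ‖z.1‖ ^ (1 - (j:ℝ)) := add_le_add hA hB
      _ = (C₀ + 1) * ‖z.1‖ ^ (1 - (j:ℝ)) := by ring
  have hDf : ∀ j : ℕ, j ≤ k →
      ‖iteratedFDerivWithin ℝ j f t (F z)‖ ≤ Cf * ‖z.1‖ ^ (α - (j:ℝ)) := by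
    intro j hjk
    have h := hCf j (hjk.trans hk) (F z) hFzt hFzε
    rw [hFx z (hsub hz)] at h
    have h2 := le_of_rpow_mul_le hpos h
    calc ‖iteratedFDerivWithin ℝ j f t (F z)‖ ≤ Cf * ‖z.1‖ ^ (-(((j:ℕ):ℝ) - α)) := h2
      _ = Cf * ‖z.1‖ ^ (α - (j:ℝ)) := by rw [neg_sub]
  have hterm : ∀ c : OrderedFinpartition k,
      ‖(ftaylorSeriesWithin ℝ f t (F z)).compAlongOrderedFinpartition
          (ftaylorSeriesWithin ℝ F s z) c‖
        ≤ Cf * (C₀ + 1) ^ k * ‖z.1‖ ^ (α - (k:ℝ)) := by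
    intro c
    have hlen : c.length ≤ k := c.length_le
    have hq : ‖ftaylorSeriesWithin ℝ f t (F z) c.length‖
        ≤ Cf * ‖z.1‖ ^ (α - (c.length:ℝ)) := hDf c.length hlen
    have hprod : ∏ i, ‖ftaylorSeriesWithin ℝ F s z (c.partSize i)‖
        ≤ (C₀ + 1) ^ c.length * ‖z.1‖ ^ ((c.length:ℝ) - (k:ℝ)) := by
      have hsum : ∑ i : Fin c.length, (1 - (c.partSize i : ℝ)) = (c.length:ℝ) - (k:ℝ) := by
        rw [Finset.sum_sub_distrib, Finset.sum_const]
        have h5 : ∑ i, ((c.partSize i : ℝ)) = (k : ℝ) := by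
          exact_mod_cast congrArg (Nat.cast : ℕ → ℝ) (sum_partSize c)
        rw [h5]
        simp [Finset.card_univ]
      calc ∏ i, ‖ftaylorSeriesWithin ℝ F s z (c.partSize i)‖
          ≤ ∏ i, ((C₀ + 1) * ‖z.1‖ ^ (1 - (c.partSize i : ℝ))) :=
            Finset.prod_le_prod (fun i _ => norm_nonneg _)
              (fun i _ => hDF (c.partSize i) (c.partSize_pos i) (c.partSize_le i))
        _ = (C₀ + 1) ^ c.length * ∏ i, ‖z.1‖ ^ (1 - (c.partSize i : ℝ)) := by
            rw [Finset.prod_mul_distrib, Finset.prod_const, Finset.card_univ, Fintype.card_fin]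
        _ = (C₀ + 1) ^ c.length * ‖z.1‖ ^ ((c.length:ℝ) - (k:ℝ)) := by
            rw [← rpow_finset_sum hpos, hsum]
    calc ‖(ftaylorSeriesWithin ℝ f t (F z)).compAlongOrderedFinpartition
          (ftaylorSeriesWithin ℝ F s z) c‖
        ≤ ‖ftaylorSeriesWithin ℝ f t (F z) c.length‖
          * ∏ i, ‖ftaylorSeriesWithin ℝ F s z (c.partSize i)‖ :=
          norm_compAlongOrderedFinpartition_le _ _ c
      _ ≤ (Cf * ‖z.1‖ ^ (α - (c.length:ℝ)))
          * ((C₀ + 1) ^ c.length * ‖z.1‖ ^ ((c.length:ℝ) - (k:ℝ))) :=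
          mul_le_mul hq hprod (Finset.prod_nonneg fun i _ => norm_nonneg _) (by positivity)
      _ = Cf * (C₀ + 1) ^ c.length
          * (‖z.1‖ ^ (α - (c.length:ℝ)) * ‖z.1‖ ^ ((c.length:ℝ) - (k:ℝ))) := by ring
      _ = Cf * (C₀ + 1) ^ c.length * ‖z.1‖ ^ (α - (k:ℝ)) := by
          rw [← Real.rpow_add hpos]
          congr 1
          ring_nf
      _ ≤ Cf * (C₀ + 1) ^ k * ‖z.1‖ ^ (α - (k:ℝ)) := by
          have h1 : (1:ℝ) ≤ C₀ + 1 := by linarith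
          have h2 : (C₀ + 1) ^ c.length ≤ (C₀ + 1) ^ k := pow_le_pow_right₀ h1 hlen
          have h3 : (0:ℝ) ≤ ‖z.1‖ ^ (α - (k:ℝ)) := Real.rpow_nonneg (norm_nonneg _) _
          exact mul_le_mul_of_nonneg_right (mul_le_mul_of_nonneg_left h2 hCf0) h3
  have hsumle : ‖((ftaylorSeriesWithin ℝ f t (F z)).taylorComp
        (ftaylorSeriesWithin ℝ F s z)) k‖
      ≤ (Fintype.card (OrderedFinpartition k) : ℝ) * (Cf * (C₀ + 1) ^ k)
        * ‖z.1‖ ^ (α - (k:ℝ)) := by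
    have e : ((ftaylorSeriesWithin ℝ f t (F z)).taylorComp (ftaylorSeriesWithin ℝ F s z)) k
        = ∑ c : OrderedFinpartition k, (ftaylorSeriesWithin ℝ f t (F z)).compAlongOrderedFinpartition
            (ftaylorSeriesWithin ℝ F s z) c := rfl
    rw [e]
    calc ‖∑ c : OrderedFinpartition k, (ftaylorSeriesWithin ℝ f t (F z)).compAlongOrderedFinpartition
            (ftaylorSeriesWithin ℝ F s z) c‖
        ≤ ∑ c : OrderedFinpartition k, ‖(ftaylorSeriesWithin ℝ f t (F z)).compAlongOrderedFinpartition
            (ftaylorSeriesWithin ℝ F s z) c‖ := norm_sum_le _ _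
      _ ≤ ∑ _c : OrderedFinpartition k, Cf * (C₀ + 1) ^ k * ‖z.1‖ ^ (α - (k:ℝ)) :=
          Finset.sum_le_sum (fun c _ => hterm c)
      _ = (Fintype.card (OrderedFinpartition k) : ℝ) * (Cf * (C₀ + 1) ^ k)
          * ‖z.1‖ ^ (α - (k:ℝ)) := by
          rw [Finset.sum_const, Finset.card_univ, nsmul_eq_mul]
          ring
  rw [hEq]
  calc ‖z.1‖ ^ ((k:ℝ) - α) * ‖((ftaylorSeriesWithin ℝ f t (F z)).taylorComp
        (ftaylorSeriesWithin ℝ F s z)) k‖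
      ≤ ‖z.1‖ ^ ((k:ℝ) - α) * ((Fintype.card (OrderedFinpartition k) : ℝ)
        * (Cf * (C₀ + 1) ^ k) * ‖z.1‖ ^ (α - (k:ℝ))) :=
        mul_le_mul_of_nonneg_left hsumle (Real.rpow_nonneg (norm_nonneg _) _)
    _ = (Fintype.card (OrderedFinpartition k) : ℝ) * (Cf * (C₀ + 1) ^ k)
        * (‖z.1‖ ^ ((k:ℝ) - α) * ‖z.1‖ ^ (α - (k:ℝ))) := by ring
    _ = (Fintype.card (OrderedFinpartition k) : ℝ) * (Cf * (C₀ + 1) ^ k) := by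
        rw [← Real.rpow_add hpos, show ((k:ℝ) - α) + (α - (k:ℝ)) = 0 by ring,
          Real.rpow_zero, mul_one]
end
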